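/- arXiv:2108.02831 — 3 statements merged into one kernel-verified Lean document; each statement's English description precedes it below -/
import Mathlib

section
/- Let m be a natural number, σ > 0 and ρ ∈ ℝ. Consider the product measure of m independent copies of gaussianReal 0 σ² on Fin m → ℝ. Then the pushforward of this measure under the map x ↦ card {i : x i > ρ} is the binomial distribution with parameters m and success probability 1 − Φ(ρ/σ) (equivalently Φ(−ρ/σ)), where Φ is the standard Gaussian CDF. -/
open MeasureTheory ProbabilityTheory

/-- The standard Gaussian cumulative distribution function. -/
noncomputable def stdGaussianCDF (x : ℝ) : ℝ := (gaussianReal 0 1 (Set.Iic x)).toReal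

lemma gauss_Iic (σ ρ : ℝ) (hσ : 0 < σ) :
    gaussianReal 0 (Real.toNNReal (σ ^ 2)) (Set.Iic ρ)
      = ENNReal.ofReal (stdGaussianCDF (ρ / σ)) := by
  have h1 : gaussianReal 0 (Real.toNNReal (σ ^ 2)) = (gaussianReal 0 1).map (σ * ·) := by
    rw [gaussianReal_map_const_mul σ]
    congr 1
    · ring
    · ext
      simp [Real.coe_toNNReal _ (sq_nonneg σ)]
  rw [h1, Measure.map_apply (measurable_id'.const_mul σ) measurableSet_Iic]
  have h2 : (σ * ·) ⁻¹' Set.Iic ρ = Set.Iic (ρ / σ) := by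
    ext x
    simp [Set.mem_Iic, le_div_iff₀ hσ, mul_comm]
  rw [h2, stdGaussianCDF, ENNReal.ofReal_toReal (measure_ne_top _ _)]

/-- under the product of `m` independent copies of `gaussianReal 0 σ²` on
`Fin m → ℝ`, the law of the number of coordinates exceeding `ρ` is the binomial
distribution with parameters `m` and success probability `p = 1 − Φ(ρ/σ)`, i.e. the
measure on `ℕ` giving mass `C(m,j) pʲ (1−p)^{m−j}` to each `j ∈ {0,…,m}`. -/
theorem law_of_count_exceeding_threshold (m : ℕ) (σ ρ : ℝ) (hσ : 0 < σ) :
    Measure.map (fun x : Fin m → ℝ => Nat.card {i : Fin m // ρ < x i})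
        (Measure.pi fun _ : Fin m => gaussianReal 0 (Real.toNNReal (σ ^ 2))) =
      ∑ j ∈ Finset.range (m + 1),
        ENNReal.ofReal ((m.choose j : ℝ) * (1 - stdGaussianCDF (ρ / σ)) ^ j *
            (stdGaussianCDF (ρ / σ)) ^ (m - j)) • Measure.dirac j := by
  set ν := gaussianReal 0 (Real.toNNReal (σ ^ 2)) with hν
  set Φ := stdGaussianCDF (ρ / σ) with hΦdef
  have hΦ0 : 0 ≤ Φ := ENNReal.toReal_nonneg
  have hq : ν (Set.Iic ρ) = ENNReal.ofReal Φ := gauss_Iic σ ρ hσ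
  have hΦ1 : Φ ≤ 1 := by
    have h := prob_le_one (μ := ν) (s := Set.Iic ρ)
    rw [hq] at h
    exact_mod_cast (ENNReal.ofReal_le_one).mp h
  have hp : ν (Set.Ioi ρ) = ENNReal.ofReal (1 - Φ) := by
    have hc : Set.Ioi ρ = (Set.Iic ρ)ᶜ := by simp
    rw [hc, measure_compl measurableSet_Iic (measure_ne_top _ _), hq, measure_univ,
      ENNReal.ofReal_sub _ hΦ0, ENNReal.ofReal_one]
  have key : ∀ x : Fin m → ℝ, Nat.card {i : Fin m // ρ < x i}
      = (Finset.univ.filter fun i => ρ < x i).card := by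
    intro x
    rw [Nat.card_eq_fintype_card, Fintype.card_subtype]
  have hf : Measurable fun x : Fin m → ℝ => Nat.card {i : Fin m // ρ < x i} := by
    simp only [key, Finset.card_filter]
    exact Finset.measurable_sum _ fun i _ =>
      Measurable.ite (measurableSet_lt measurable_const (measurable_pi_apply i))
        measurable_const measurable_const
  -- the rectangle sets
  set A : Finset (Fin m) → Set (Fin m → ℝ) :=
    fun S => Set.pi Set.univ fun i => if i ∈ S then Set.Ioi ρ else Set.Iic ρ with hA
  have hmemA : ∀ (S : Finset (Fin m)) (x : Fin m → ℝ),
      x ∈ A S ↔ (Finset.univ.filter fun i => ρ < x i) = S := by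
    intro S x
    simp only [hA, Set.mem_pi, Set.mem_univ, forall_true_left]
    constructor
    · intro h
      ext i
      simp only [Finset.mem_filter, Finset.mem_univ, true_and]
      by_cases hi : i ∈ S
      · have := h i
        rw [if_pos hi] at this
        exact ⟨fun _ => hi, fun _ => this⟩
      · have := h i
        rw [if_neg hi] at this
        exact ⟨fun hlt => absurd hlt (not_lt.mpr this), fun hS => absurd hS hi⟩
    · intro h i
      split_ifs with hi
      · rw [← h] at hi
        exact (Finset.mem_filter.mp hi).2
      · rw [← h] at hi
        have : ¬ ρ < x i := fun hlt => hi (Finset.mem_filter.mpr ⟨Finset.mem_univ i, hlt⟩)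
        exact not_lt.mp this
  have hmA : ∀ S : Finset (Fin m), MeasurableSet (A S) := by
    intro S
    refine MeasurableSet.univ_pi fun i => ?_
    split_ifs
    · exact measurableSet_Ioi
    · exact measurableSet_Iic
  have hAmeas : ∀ S : Finset (Fin m),
      Measure.pi (fun _ : Fin m => ν) (A S)
        = ENNReal.ofReal (1 - Φ) ^ S.card * ENNReal.ofReal Φ ^ (m - S.card) := by
    intro S
    rw [hA, Measure.pi_pi]
    have : ∀ i : Fin m, ν (if i ∈ S then Set.Ioi ρ else Set.Iic ρ)
        = if i ∈ S then ENNReal.ofReal (1 - Φ) else ENNReal.ofReal Φ := by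
      intro i; split_ifs
      · exact hp
      · exact hq
    simp only [this]
    rw [Finset.prod_ite, Finset.prod_const, Finset.prod_const,
      Finset.filter_mem_eq_inter, Finset.univ_inter]
    congr 1
    congr 1
    have : Finset.univ.filter (fun i => ¬ i ∈ S) = Sᶜ := by
      ext i; simp [Finset.mem_compl]
    rw [this, Finset.card_compl, Fintype.card_fin]
  refine MeasureTheory.Measure.ext_of_singleton fun j => ?_
  rw [Measure.map_apply hf (measurableSet_singleton j)]
  have hRHS : (∑ k ∈ Finset.range (m + 1),
        ENNReal.ofReal ((m.choose k : ℝ) * (1 - Φ) ^ k * Φ ^ (m - k)) • Measure.dirac k) {j}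
      = if j ∈ Finset.range (m + 1)
          then ENNReal.ofReal ((m.choose j : ℝ) * (1 - Φ) ^ j * Φ ^ (m - j)) else 0 := by
    rw [Measure.finset_sum_apply]
    simp only [Measure.smul_apply, Measure.dirac_apply, smul_eq_mul,
      Set.indicator_apply, Set.mem_singleton_iff, Pi.one_apply, mul_ite, mul_one, mul_zero]
    rw [Finset.sum_ite_eq' (Finset.range (m + 1)) j]
  rw [hRHS]
  by_cases hj : j ≤ m
  · rw [if_pos (Finset.mem_range.mpr (Nat.lt_succ_of_le hj))]
    have hpre : (fun x : Fin m → ℝ => Nat.card {i : Fin m // ρ < x i}) ⁻¹' {j}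
        = ⋃ S ∈ Finset.powersetCard j (Finset.univ : Finset (Fin m)), A S := by
      ext x
      simp only [Set.mem_preimage, Set.mem_singleton_iff, Set.mem_iUnion, key,
        Finset.mem_powersetCard, exists_prop]
      constructor
      · intro hx
        exact ⟨Finset.univ.filter fun i => ρ < x i, ⟨Finset.subset_univ _, hx⟩,
          (hmemA _ x).mpr rfl⟩
      · rintro ⟨S, ⟨-, hcard⟩, hxS⟩
        rw [(hmemA S x).mp hxS]
        exact hcard
    rw [hpre, measure_biUnion_finset ?_ fun S _ => hmA S]
    · have hterm : ∀ S ∈ Finset.powersetCard j (Finset.univ : Finset (Fin m)),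
          Measure.pi (fun _ : Fin m => ν) (A S)
            = ENNReal.ofReal (1 - Φ) ^ j * ENNReal.ofReal Φ ^ (m - j) := by
        intro S hS
        rw [hAmeas S, (Finset.mem_powersetCard.mp hS).2]
      rw [Finset.sum_congr rfl hterm, Finset.sum_const, Finset.card_powersetCard,
        Finset.card_univ, Fintype.card_fin]
      rw [ENNReal.ofReal_mul (mul_nonneg (Nat.cast_nonneg _) (pow_nonneg (by linarith) _)),
        ENNReal.ofReal_mul (Nat.cast_nonneg _),
        ENNReal.ofReal_pow (by linarith), ENNReal.ofReal_pow hΦ0,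
        ENNReal.ofReal_natCast, nsmul_eq_mul, mul_assoc]
    · intro S hS T hT hST
      rw [Function.onFun, Set.disjoint_left]
      intro x hxS hxT
      exact hST (((hmemA S x).mp hxS).symm.trans ((hmemA T x).mp hxT))
  · rw [if_neg (by simpa using Nat.lt_of_not_le hj)]
    have : (fun x : Fin m → ℝ => Nat.card {i : Fin m // ρ < x i}) ⁻¹' {j} = ∅ := by
      ext x
      simp only [Set.mem_preimage, Set.mem_singleton_iff, Set.mem_empty_iff_false, iff_false]
      intro h
      apply hj
      rw [← h, key]
      exact le_trans (Finset.card_filter_le _ _) (by simp)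
    rw [this, measure_empty]
end

section
/- Let σ > 0 and ε > 0, and set δ = Φ(−εσ + 1/(2σ)) − e^ε · Φ(−εσ − 1/(2σ)), where Φ is the standard Gaussian CDF. Then for every measurable set S ⊆ ℝ, (gaussianReal 0 σ²)(S) ≤ e^ε · (gaussianReal 1 σ²)(S) + δ. -/
open MeasureTheory ProbabilityTheory

/-!
The privacy loss `log (p₀ x / p₁ x) = (1 - 2x) / (2σ²)` of the two Gaussian densities is affine, so
it is at least `ε` exactly on `A = (-∞, 1/2 - εσ²]`. Off `A` the density of `N(0,σ²)` is at most
`e^ε` times that of `N(1,σ²)`, on `A` at least, hence `N(0,σ²)(S) - e^ε N(1,σ²)(S)` is largest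
for `S = A`; standardizing the two Gaussian CDFs at `1/2 - εσ²` turns that maximum into `δ`.
-/

open Real Set
open scoped ENNReal NNReal

namespace MeasureTheory

variable {α : Type*} [MeasurableSpace α]

lemma restrict_withDensity_mono {μ : Measure α} {f g : α → ℝ≥0∞} {s : Set α}
    (hs : MeasurableSet s) (hfg : ∀ x ∈ s, f x ≤ g x) :
    (μ.withDensity f).restrict s ≤ (μ.withDensity g).restrict s := by
  rw [restrict_withDensity hs, restrict_withDensity hs]
  exact withDensity_mono (ae_restrict_of_forall_mem hs hfg)

/-- The excess `μ S - ν S` is maximised at the set `A` separating where `μ ≤ ν` from `ν ≤ μ`. -/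
lemma measure_le_add_tsub_of_restrict_le {μ ν : Measure α} {A S : Set α}
    (hA : MeasurableSet A) (hS : MeasurableSet S) (hνA : ν A ≠ ∞)
    (h_out : μ.restrict Aᶜ ≤ ν.restrict Aᶜ) (h_in : ν.restrict A ≤ μ.restrict A) :
    μ S ≤ ν S + (μ A - ν A) := by
  have h_diff : μ (S \ A) ≤ ν (S \ A) := by
    simpa only [Measure.restrict_apply hS, sdiff_eq] using h_out S
  have h_excess : μ (S ∩ A) - ν (S ∩ A) ≤ μ A - ν A := by
    have h_fin : ν (A \ S) ≠ ∞ := measure_ne_top_of_subset sdiff_subset hνA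
    calc μ (S ∩ A) - ν (S ∩ A)
        = μ (S ∩ A) + ν (A \ S) - (ν (S ∩ A) + ν (A \ S)) :=
          (ENNReal.add_sub_add_eq_sub_right h_fin).symm
      _ ≤ μ (S ∩ A) + μ (A \ S) - (ν (S ∩ A) + ν (A \ S)) := by
          gcongr _ + ?_ - _
          simpa only [Measure.restrict_eq_self _ sdiff_subset] using h_in (A \ S)
      _ = μ A - ν A := by
          rw [inter_comm, measure_inter_add_sdiff _ hS, measure_inter_add_sdiff _ hS]
  calc μ S = μ (S ∩ A) + μ (S \ A) := (measure_inter_add_sdiff S hA).symm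
    _ ≤ ν (S ∩ A) + (μ A - ν A) + ν (S \ A) := by
        gcongr
        exact le_add_tsub.trans (by gcongr)
    _ = ν S + (μ A - ν A) := by
        rw [add_right_comm, measure_inter_add_sdiff S hA]

end MeasureTheory

namespace ProbabilityTheory

lemma gaussianPDFReal_eq_exp_mul (μ ν : ℝ) (v : ℝ≥0) (x : ℝ) :
    gaussianPDFReal μ v x =
      exp (((x - ν) ^ 2 - (x - μ) ^ 2) / (2 * v)) * gaussianPDFReal ν v x := by
  simp only [gaussianPDFReal]
  rw [mul_left_comm, ← exp_add]
  congr 3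
  ring

lemma gaussianPDF_zero_eq (v : ℝ≥0) (x : ℝ) :
    gaussianPDF 0 v x = ENNReal.ofReal (exp ((1 - 2 * x) / (2 * v))) * gaussianPDF 1 v x := by
  rw [gaussianPDF, gaussianPDF, gaussianPDFReal_eq_exp_mul 0 1,
    ENNReal.ofReal_mul (exp_pos _).le]
  ring_nf

lemma gaussianPDF_zero_le_of_le {v : ℝ≥0} (hv : v ≠ 0) {ε x : ℝ} (hx : 1 / 2 - ε * v ≤ x) :
    gaussianPDF 0 v x ≤ ENNReal.ofReal (exp ε) * gaussianPDF 1 v x := by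
  rw [gaussianPDF_zero_eq]
  gcongr
  rw [div_le_iff₀ (by positivity)]
  linarith

lemma le_gaussianPDF_zero_of_le {v : ℝ≥0} (hv : v ≠ 0) {ε x : ℝ} (hx : x ≤ 1 / 2 - ε * v) :
    ENNReal.ofReal (exp ε) * gaussianPDF 1 v x ≤ gaussianPDF 0 v x := by
  rw [gaussianPDF_zero_eq]
  gcongr
  rw [le_div_iff₀ (by positivity)]
  linarith

lemma restrict_gaussianReal_zero_le {v : ℝ≥0} (hv : v ≠ 0) (ε : ℝ) :
    (gaussianReal 0 v).restrict (Iic (1 / 2 - ε * v))ᶜ ≤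
      (ENNReal.ofReal (exp ε) • gaussianReal 1 v).restrict (Iic (1 / 2 - ε * v))ᶜ := by
  rw [gaussianReal_of_var_ne_zero _ hv, gaussianReal_of_var_ne_zero _ hv,
    ← withDensity_smul _ (measurable_gaussianPDF 1 v)]
  refine restrict_withDensity_mono measurableSet_Iic.compl fun x hx ↦ ?_
  rw [mem_compl_iff, mem_Iic, not_le] at hx
  exact gaussianPDF_zero_le_of_le hv hx.le

lemma restrict_smul_gaussianReal_one_le {v : ℝ≥0} (hv : v ≠ 0) (ε : ℝ) :
    (ENNReal.ofReal (exp ε) • gaussianReal 1 v).restrict (Iic (1 / 2 - ε * v)) ≤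
      (gaussianReal 0 v).restrict (Iic (1 / 2 - ε * v)) := by
  rw [gaussianReal_of_var_ne_zero _ hv, gaussianReal_of_var_ne_zero _ hv,
    ← withDensity_smul _ (measurable_gaussianPDF 1 v)]
  exact restrict_withDensity_mono measurableSet_Iic fun x hx ↦ le_gaussianPDF_zero_of_le hv hx

lemma gaussianReal_zero_one_map_mul_add (σ μ : ℝ) :
    (gaussianReal 0 1).map (fun x ↦ σ * x + μ) = gaussianReal μ (σ ^ 2).toNNReal := by
  have h_comp : (fun x ↦ σ * x + μ) = (· + μ) ∘ (σ * ·) := rfl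
  rw [h_comp, ← Measure.map_map (by fun_prop) (by fun_prop), gaussianReal_map_const_mul,
    gaussianReal_map_add_const, mul_zero, zero_add, mul_one,
    Real.toNNReal_of_nonneg (sq_nonneg σ)]

lemma stdGaussianCDF_nonneg (x : ℝ) : 0 ≤ stdGaussianCDF x := ENNReal.toReal_nonneg

lemma gaussianReal_Iic {σ : ℝ} (hσ : 0 < σ) (μ t : ℝ) :
    gaussianReal μ (σ ^ 2).toNNReal (Iic t) = ENNReal.ofReal (stdGaussianCDF ((t - μ) / σ)) := by
  rw [stdGaussianCDF, ENNReal.ofReal_toReal (measure_ne_top _ _),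
    ← gaussianReal_zero_one_map_mul_add, Measure.map_apply (by fun_prop) measurableSet_Iic]
  congr 1
  ext x
  simp only [mem_preimage, mem_Iic, le_div_iff₀ hσ]
  constructor <;> intro h <;> linarith

end ProbabilityTheory

theorem gaussian_mechanism_dp_general (σ ε : ℝ) (hσ : 0 < σ) (δ : ℝ)
    (hδ : δ = stdGaussianCDF (-ε * σ + 1 / (2 * σ)) -
        Real.exp ε * stdGaussianCDF (-ε * σ - 1 / (2 * σ))) :
    ∀ S : Set ℝ, MeasurableSet S →
      gaussianReal 0 (Real.toNNReal (σ ^ 2)) S ≤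
        ENNReal.ofReal (Real.exp ε) * gaussianReal 1 (Real.toNNReal (σ ^ 2)) S +
          ENNReal.ofReal δ := by
  intro S hS
  set v := (σ ^ 2).toNNReal
  have hv : (v : ℝ) = σ ^ 2 := Real.coe_toNNReal _ (sq_nonneg σ)
  have hv0 : v ≠ 0 := by rw [← NNReal.coe_ne_zero, hv]; positivity
  have hA : Iic (1 / 2 - ε * v) = Iic (1 / 2 - ε * σ ^ 2) := by rw [hv]
  have hμ0 : gaussianReal 0 v (Iic (1 / 2 - ε * v)) =
      ENNReal.ofReal (stdGaussianCDF (-ε * σ + 1 / (2 * σ))) := by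
    rw [hA, gaussianReal_Iic hσ]; congr 2; field_simp; ring
  have hμ1 : gaussianReal 1 v (Iic (1 / 2 - ε * v)) =
      ENNReal.ofReal (stdGaussianCDF (-ε * σ - 1 / (2 * σ))) := by
    rw [hA, gaussianReal_Iic hσ]; congr 2; field_simp; ring
  calc gaussianReal 0 v S
      ≤ (ENNReal.ofReal (exp ε) • gaussianReal 1 v) S +
          (gaussianReal 0 v (Iic (1 / 2 - ε * v)) -
            (ENNReal.ofReal (exp ε) • gaussianReal 1 v) (Iic (1 / 2 - ε * v))) :=
        measure_le_add_tsub_of_restrict_le measurableSet_Iic hS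
          (ENNReal.mul_ne_top ENNReal.ofReal_ne_top (measure_ne_top _ _))
          (restrict_gaussianReal_zero_le hv0 ε) (restrict_smul_gaussianReal_one_le hv0 ε)
    _ = _ := by
        rw [Measure.smul_apply, Measure.smul_apply, smul_eq_mul, smul_eq_mul, hμ0, hμ1, hδ,
          ← ENNReal.ofReal_mul (exp_pos ε).le,
          ENNReal.ofReal_sub _ (mul_nonneg (exp_pos ε).le (stdGaussianCDF_nonneg _))]

/-- Balle–Wang Gaussian mechanism bound, sensitivity 1: for `σ > 0`, `ε > 0`
and `δ = Φ(−εσ + 1/(2σ)) − e^ε Φ(−εσ − 1/(2σ))`, every measurable set `S ⊆ ℝ` satisfies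
`N(0,σ²)(S) ≤ e^ε · N(1,σ²)(S) + δ`. -/
theorem gaussian_mechanism_dp (σ ε : ℝ) (hσ : 0 < σ) (hε : 0 < ε) (δ : ℝ)
    (hδ : δ = stdGaussianCDF (-ε * σ + 1 / (2 * σ)) -
        Real.exp ε * stdGaussianCDF (-ε * σ - 1 / (2 * σ))) :
    ∀ S : Set ℝ, MeasurableSet S →
      gaussianReal 0 (Real.toNNReal (σ ^ 2)) S ≤
        ENNReal.ofReal (Real.exp ε) * gaussianReal 1 (Real.toNNReal (σ ^ 2)) S +
          ENNReal.ofReal δ :=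
  gaussian_mechanism_dp_general σ ε hσ δ hδ
end

section
/- Let t ≥ 1 be a natural number, σ > 0, δ ∈ (0,1), and suppose ρ ≥ 1/√t + σ · Φ⁻¹((1 − δ/2)^{1/t}), where Φ⁻¹ is the inverse on (0,1) of the standard Gaussian CDF Φ. Then, under the product measure of t independent copies of gaussianReal 0 σ² on Fin t → ℝ, the probability of the event {Z : ∃ i, 1/√t + Z i > ρ} is at most δ/2. In particular this holds for ρ = ρ_1 := max_{1 ≤ t' ≤ Δ} (1/√t' + σ · Φ⁻¹((1 − δ/2)^{1/t'})) whenever t ≤ Δ. -/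
/-!
The noise vector stays below `ρ - 1/√t` in every coordinate with probability
`Φ((ρ - 1/√t)/σ)^t`, and the choice of `ρ` makes each factor at least `(1 - δ/2)^(1/t)`,
so the complementary event has probability at most `δ/2`.
-/

open MeasureTheory ProbabilityTheory

lemma stdGaussianCDF_mono : Monotone stdGaussianCDF := fun _ _ hab =>
  ENNReal.toReal_mono (measure_ne_top _ _) (measure_mono (Set.Iic_subset_Iic.mpr hab))

lemma gaussianReal_Iic_eq_ofReal_stdGaussianCDF {σ : ℝ} (hσ : 0 < σ) (c : ℝ) :
    gaussianReal 0 (σ ^ 2).toNNReal (Set.Iic c) = ENNReal.ofReal (stdGaussianCDF (c / σ)) := by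
  have hmap : (gaussianReal 0 1).map (σ * ·) = gaussianReal 0 (σ ^ 2).toNNReal := by
    rw [gaussianReal_map_const_mul, mul_zero, mul_one]
    congr
    simp [sq_nonneg]
  have hpre : (σ * ·) ⁻¹' Set.Iic c = Set.Iic (c / σ) := by
    ext x
    simp [← le_div_iff₀' hσ]
  rw [← hmap, Measure.map_apply (measurable_const_mul σ) measurableSet_Iic, hpre, stdGaussianCDF,
    ENNReal.ofReal_toReal (measure_ne_top _ _)]

lemma measure_pi_exists_not_mem {ι α : Type*} [Fintype ι] [MeasurableSpace α]
    (μ : Measure α) [IsProbabilityMeasure μ] {s : Set α} (hs : MeasurableSet s) :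
    Measure.pi (fun _ : ι => μ) {Z | ∃ i, Z i ∉ s} = 1 - μ s ^ Fintype.card ι := by
  have hbox : {Z : ι → α | ∃ i, Z i ∉ s} = (Set.univ.pi fun _ => s)ᶜ := by
    ext Z
    simp
  rw [hbox, prob_compl_eq_one_sub (MeasurableSet.univ_pi fun _ => hs), Measure.pi_pi,
    Finset.prod_const, Finset.card_univ]

lemma le_stdGaussianCDF_div_of_mul_le {Φinv : ℝ → ℝ}
    (hinv : ∀ y : ℝ, 0 < y → y < 1 → stdGaussianCDF (Φinv y) = y)
    {y σ c : ℝ} (hy₀ : 0 < y) (hy₁ : y < 1) (hσ : 0 < σ) (hc : σ * Φinv y ≤ c) :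
    y ≤ stdGaussianCDF (c / σ) :=
  (hinv y hy₀ hy₁).symm.trans_le <| stdGaussianCDF_mono <| (le_div_iff₀' hσ).mpr hc

lemma ENNReal.one_sub_ofReal_one_sub {a : ℝ} (ha : a ≤ 1) :
    1 - ENNReal.ofReal (1 - a) = ENNReal.ofReal a := by
  rw [← ENNReal.ofReal_one, ← ENNReal.ofReal_sub _ (by linarith), sub_sub_self]

theorem dpsu_threshold_privacy_general (t : ℕ) (ht : 1 ≤ t) (σ : ℝ) (hσ : 0 < σ)
    (δ : ℝ) (hδ0 : 0 < δ) (hδ1 : δ < 1)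
    (Φinv : ℝ → ℝ)
    (hinv₂ : ∀ y : ℝ, 0 < y → y < 1 → stdGaussianCDF (Φinv y) = y)
    (ρ : ℝ) (hρ : 1 / Real.sqrt t + σ * Φinv ((1 - δ / 2) ^ ((1 : ℝ) / t)) ≤ ρ) :
    Measure.pi (fun _ : Fin t => gaussianReal 0 (Real.toNNReal (σ ^ 2)))
        {Z : Fin t → ℝ | ∃ i, 1 / Real.sqrt t + Z i > ρ} ≤
      ENNReal.ofReal (δ / 2) := by
  set c := ρ - 1 / Real.sqrt t
  set y := (1 - δ / 2) ^ ((1 : ℝ) / t) with hy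
  have hy₀ : 0 < y := Real.rpow_pos_of_pos (by linarith) _
  have hy₁ : y < 1 := Real.rpow_lt_one (by linarith) (by linarith) (by positivity)
  have hyt : y ^ t = 1 - δ / 2 := by
    rw [hy, one_div, Real.rpow_inv_natCast_pow (by linarith) (by omega)]
  have hyc : y ≤ stdGaussianCDF (c / σ) :=
    le_stdGaussianCDF_div_of_mul_le hinv₂ hy₀ hy₁ hσ (by linarith)
  have hevent : {Z : Fin t → ℝ | ∃ i, 1 / Real.sqrt t + Z i > ρ} = {Z | ∃ i, Z i ∉ Set.Iic c} := by
    ext Z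
    simp only [Set.mem_ofPred_eq, Set.mem_Iic, not_le, c, sub_lt_iff_lt_add']
  rw [hevent, measure_pi_exists_not_mem _ measurableSet_Iic, Fintype.card_fin,
    gaussianReal_Iic_eq_ofReal_stdGaussianCDF hσ, ← ENNReal.ofReal_pow (hy₀.le.trans hyc)]
  calc 1 - ENNReal.ofReal (stdGaussianCDF (c / σ) ^ t)
      ≤ 1 - ENNReal.ofReal (y ^ t) := by gcongr
    _ = ENNReal.ofReal (δ / 2) := by
      rw [hyt, ENNReal.one_sub_ofReal_one_sub (by linarith)]

/-- let `t ≥ 1`, `σ > 0`, `δ ∈ (0,1)`, let `Φinv` be the inverse on `(0,1)` of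
the standard Gaussian CDF `Φ`, and suppose `ρ ≥ 1/√t + σ · Φinv((1 − δ/2)^(1/t))`. Then,
under the product of `t` independent copies of `gaussianReal 0 σ²` on `Fin t → ℝ`, the
probability of the event `{Z : ∃ i, 1/√t + Z i > ρ}` is at most `δ/2`. (In particular, this
holds for the threshold `ρ₁ = max_{1 ≤ t' ≤ Δ} (1/√t' + σ · Φinv((1 − δ/2)^(1/t')))`
whenever `t ≤ Δ`.) -/
theorem dpsu_threshold_privacy (t : ℕ) (ht : 1 ≤ t) (σ : ℝ) (hσ : 0 < σ)
    (δ : ℝ) (hδ0 : 0 < δ) (hδ1 : δ < 1)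
    (Φinv : ℝ → ℝ) (hinv₁ : ∀ x : ℝ, Φinv (stdGaussianCDF x) = x)
    (hinv₂ : ∀ y : ℝ, 0 < y → y < 1 → stdGaussianCDF (Φinv y) = y)
    (ρ : ℝ) (hρ : 1 / Real.sqrt t + σ * Φinv ((1 - δ / 2) ^ ((1 : ℝ) / t)) ≤ ρ) :
    Measure.pi (fun _ : Fin t => gaussianReal 0 (Real.toNNReal (σ ^ 2)))
        {Z : Fin t → ℝ | ∃ i, 1 / Real.sqrt t + Z i > ρ} ≤
      ENNReal.ofReal (δ / 2) :=
  dpsu_threshold_privacy_general t ht σ hσ δ hδ0 hδ1 Φinv hinv₂ ρ hρ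
end
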